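/- Let f : x ⟶ w and f' : y ⟶ x be 1-cells of a bicategory. If f' is a lali (resp. a rali), then f is a lali (resp. a rali) if and only if the composite f' ≫ f is a lali (resp. a rali). -/

import Mathlib

/-!
Lalis compose because the counit of a composite adjunction is built from the two counits
and coherence isomorphisms. For the cancellation, if `f' ⊣ g'` has invertible counit and
`f' ≫ f ⊣ h`, then `f ⊣ h ≫ f'`: the counit is that of `f' ≫ f ⊣ h`, and the unit is
`𝟙 ≅ g' ≫ f' ⟶ g' ≫ (f' ≫ f ≫ h) ≫ f' ⟶ f ≫ h ≫ f'`, using the unit of `f' ≫ f ⊣ h` and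
then the counit of `f' ⊣ g'`. The rali case is dual, with 2-cells reversed.
-/

open CategoryTheory

/-- A 1-cell `f` in a bicategory is a *lali* (left adjoint and left inverse up to
invertible 2-cell) if it has a right adjoint with invertible counit. -/
def IsLali {B : Type*} [Bicategory B] {a b : B} (f : a ⟶ b) : Prop :=
  ∃ (g : b ⟶ a) (adj : Bicategory.Adjunction f g), IsIso adj.counit

/-- A 1-cell `f` in a bicategory is a *rali* (right adjoint and left inverse up to
invertible 2-cell) if it has a left adjoint with invertible unit. -/
def IsRali {B : Type*} [Bicategory B] {a b : B} (f : a ⟶ b) : Prop :=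
  ∃ (e : b ⟶ a) (adj : Bicategory.Adjunction e f), IsIso adj.unit

namespace CategoryTheory.Bicategory.Adjunction

open scoped CategoryTheory.Bicategory

variable {B : Type*} [Bicategory B] {x y w : B}

instance isIso_compCounit {f₁ : y ⟶ x} {g₁ : x ⟶ y} {f₂ : x ⟶ w} {g₂ : w ⟶ x}
    (adj₁ : f₁ ⊣ g₁) (adj₂ : f₂ ⊣ g₂) [IsIso adj₁.counit] [IsIso adj₂.counit] :
    IsIso (compCounit adj₁ adj₂) := by
  dsimp only [compCounit, bicategoricalComp]
  infer_instance

instance isIso_compUnit {f₁ : y ⟶ x} {g₁ : x ⟶ y} {f₂ : x ⟶ w} {g₂ : w ⟶ x}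
    (adj₁ : f₁ ⊣ g₁) (adj₂ : f₂ ⊣ g₂) [IsIso adj₁.unit] [IsIso adj₂.unit] :
    IsIso (compUnit adj₁ adj₂) := by
  dsimp only [compUnit, bicategoricalComp]
  infer_instance

theorem whiskerLeft_inv_counit {f : y ⟶ x} {g : x ⟶ y} (adj : f ⊣ g) [IsIso adj.counit] :
    f ◁ inv adj.counit = 𝟙 _ ⊗≫ adj.unit ▷ f ⊗≫ 𝟙 _ := by
  rw [← cancel_mono (f ◁ adj.counit), ← whiskerLeft_comp, IsIso.inv_hom_id, whiskerLeft_id]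
  calc 𝟙 (f ≫ 𝟙 x) = 𝟙 _ ⊗≫ leftZigzag adj.unit adj.counit ⊗≫ 𝟙 _ := by
        rw [adj.left_triangle]; bicategory
    _ = (𝟙 _ ⊗≫ adj.unit ▷ f ⊗≫ 𝟙 _) ≫ f ◁ adj.counit := by
        dsimp only [leftZigzag]; bicategory

theorem whiskerLeft_inv_unit {e : x ⟶ y} {f : y ⟶ x} (adj : e ⊣ f) [IsIso adj.unit] :
    f ◁ inv adj.unit = 𝟙 _ ⊗≫ adj.counit ▷ f ⊗≫ 𝟙 _ := by
  rw [← cancel_epi (f ◁ adj.unit), ← whiskerLeft_comp, IsIso.hom_inv_id, whiskerLeft_id]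
  calc 𝟙 (f ≫ 𝟙 x) = 𝟙 _ ⊗≫ rightZigzag adj.unit adj.counit ⊗≫ 𝟙 _ := by
        rw [adj.right_triangle]; bicategory
    _ = f ◁ adj.unit ≫ (𝟙 _ ⊗≫ adj.counit ▷ f ⊗≫ 𝟙 _) := by
        dsimp only [rightZigzag]; bicategory

section CancelLeftAdjoint

variable {f' : y ⟶ x} {g' : x ⟶ y} {f : x ⟶ w} {h : w ⟶ y}
  (adj' : f' ⊣ g') [IsIso adj'.counit] (adj : f' ≫ f ⊣ h)

noncomputable def cancelLeftAdjointUnit : 𝟙 x ⟶ f ≫ h ≫ f' :=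
  inv adj'.counit ⊗≫ g' ◁ adj.unit ▷ f' ⊗≫ adj'.counit ▷ (f ≫ h ≫ f') ⊗≫ 𝟙 _

theorem cancelLeftAdjoint_left_triangle :
    leftZigzag (cancelLeftAdjointUnit adj' adj) ((α_ h f' f).hom ≫ adj.counit) =
      (λ_ f).hom ≫ (ρ_ f).inv := by
  calc _ = 𝟙 _ ⊗≫ inv adj'.counit ▷ f ⊗≫ g' ◁ adj.unit ▷ (f' ≫ f) ⊗≫
          (adj'.counit ▷ (f ≫ h ≫ f' ≫ f) ≫ 𝟙 x ◁ (f ◁ adj.counit)) ⊗≫ 𝟙 _ := by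
        dsimp only [cancelLeftAdjointUnit, leftZigzag]; bicategory
    _ = 𝟙 _ ⊗≫ inv adj'.counit ▷ f ⊗≫ g' ◁ leftZigzag adj.unit adj.counit ⊗≫
          adj'.counit ▷ f ⊗≫ 𝟙 _ := by
        rw [← whisker_exchange]; dsimp only [leftZigzag]; bicategory
    _ = 𝟙 _ ⊗≫ (inv adj'.counit ≫ adj'.counit) ▷ f ⊗≫ 𝟙 _ := by
        rw [adj.left_triangle]; bicategory
    _ = _ := by rw [IsIso.inv_hom_id]; bicategory

theorem cancelLeftAdjoint_right_triangle :
    rightZigzag (cancelLeftAdjointUnit adj' adj) ((α_ h f' f).hom ≫ adj.counit) =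
      (ρ_ (h ≫ f')).hom ≫ (λ_ (h ≫ f')).inv := by
  calc _ = 𝟙 _ ⊗≫ h ◁ (f' ◁ inv adj'.counit) ⊗≫ (h ≫ f' ≫ g') ◁ adj.unit ▷ f' ⊗≫
          (h ≫ f') ◁ adj'.counit ▷ (f ≫ h ≫ f') ⊗≫ adj.counit ▷ (h ≫ f') ⊗≫ 𝟙 _ := by
        dsimp only [cancelLeftAdjointUnit, rightZigzag]; bicategory
    _ = 𝟙 _ ⊗≫ h ◁ (adj'.unit ▷ 𝟙 y ≫ (f' ≫ g') ◁ adj.unit) ▷ f' ⊗≫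
          (h ≫ f') ◁ adj'.counit ▷ (f ≫ h ≫ f') ⊗≫ adj.counit ▷ (h ≫ f') ⊗≫ 𝟙 _ := by
        rw [whiskerLeft_inv_counit adj']; bicategory
    _ = 𝟙 _ ⊗≫ (h ≫ 𝟙 y) ◁ adj.unit ▷ f' ⊗≫
          h ◁ leftZigzag adj'.unit adj'.counit ▷ ((f ≫ h) ≫ f') ⊗≫
          adj.counit ▷ (h ≫ f') ⊗≫ 𝟙 _ := by
        rw [← whisker_exchange]; dsimp only [leftZigzag]; bicategory
    _ = 𝟙 _ ⊗≫ rightZigzag adj.unit adj.counit ▷ f' ⊗≫ 𝟙 _ := by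
        rw [adj'.left_triangle]; dsimp only [rightZigzag]; bicategory
    _ = _ := by rw [adj.right_triangle]; bicategory

noncomputable def cancelLeftAdjoint : f ⊣ h ≫ f' where
  unit := cancelLeftAdjointUnit adj' adj
  counit := (α_ h f' f).hom ≫ adj.counit
  left_triangle := cancelLeftAdjoint_left_triangle adj' adj
  right_triangle := cancelLeftAdjoint_right_triangle adj' adj

end CancelLeftAdjoint

section CancelRightAdjoint

variable {e' : x ⟶ y} {f' : y ⟶ x} {f : x ⟶ w} {e : w ⟶ y}
  (adj' : e' ⊣ f') [IsIso adj'.unit] (adj : e ⊣ f' ≫ f)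

noncomputable def cancelRightAdjointCounit : f ≫ e ≫ f' ⟶ 𝟙 x :=
  𝟙 _ ⊗≫ adj'.unit ▷ (f ≫ e ≫ f') ⊗≫ e' ◁ adj.counit ▷ f' ⊗≫ inv adj'.unit

theorem cancelRightAdjoint_left_triangle :
    leftZigzag (adj.unit ≫ (α_ e f' f).inv) (cancelRightAdjointCounit adj' adj) =
      (λ_ (e ≫ f')).hom ≫ (ρ_ (e ≫ f')).inv := by
  calc _ = 𝟙 _ ⊗≫ adj.unit ▷ (e ≫ f') ⊗≫ (e ≫ f') ◁ adj'.unit ▷ (f ≫ e ≫ f') ⊗≫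
          (e ≫ f' ≫ e') ◁ adj.counit ▷ f' ⊗≫ e ◁ (f' ◁ inv adj'.unit) ⊗≫ 𝟙 _ := by
        dsimp only [cancelRightAdjointCounit, leftZigzag]; bicategory
    _ = 𝟙 _ ⊗≫ adj.unit ▷ (e ≫ f') ⊗≫ (e ≫ f') ◁ adj'.unit ▷ (f ≫ e ≫ f') ⊗≫
          e ◁ ((f' ≫ e') ◁ adj.counit ≫ adj'.counit ▷ 𝟙 y) ▷ f' ⊗≫ 𝟙 _ := by
        rw [whiskerLeft_inv_unit adj']; bicategory
    _ = 𝟙 _ ⊗≫ adj.unit ▷ (e ≫ f') ⊗≫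
          e ◁ rightZigzag adj'.unit adj'.counit ▷ ((f ≫ e) ≫ f') ⊗≫
          e ◁ adj.counit ▷ f' ⊗≫ 𝟙 _ := by
        rw [whisker_exchange]; dsimp only [rightZigzag]; bicategory
    _ = 𝟙 _ ⊗≫ leftZigzag adj.unit adj.counit ▷ f' ⊗≫ 𝟙 _ := by
        rw [adj'.right_triangle]; dsimp only [leftZigzag]; bicategory
    _ = _ := by rw [adj.left_triangle]; bicategory

theorem cancelRightAdjoint_right_triangle :
    rightZigzag (adj.unit ≫ (α_ e f' f).inv) (cancelRightAdjointCounit adj' adj) =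
      (ρ_ f).hom ≫ (λ_ f).inv := by
  calc _ = 𝟙 _ ⊗≫ (𝟙 x ◁ (f ◁ adj.unit) ≫ adj'.unit ▷ (f ≫ e ≫ f' ≫ f)) ⊗≫
          e' ◁ adj.counit ▷ (f' ≫ f) ⊗≫ inv adj'.unit ▷ f ⊗≫ 𝟙 _ := by
        dsimp only [cancelRightAdjointCounit, rightZigzag]; bicategory
    _ = 𝟙 _ ⊗≫ adj'.unit ▷ f ⊗≫ e' ◁ rightZigzag adj.unit adj.counit ⊗≫
          inv adj'.unit ▷ f ⊗≫ 𝟙 _ := by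
        rw [whisker_exchange]; dsimp only [rightZigzag]; bicategory
    _ = 𝟙 _ ⊗≫ (adj'.unit ≫ inv adj'.unit) ▷ f ⊗≫ 𝟙 _ := by
        rw [adj.right_triangle]; bicategory
    _ = _ := by rw [IsIso.hom_inv_id]; bicategory

noncomputable def cancelRightAdjoint : e ≫ f' ⊣ f where
  unit := adj.unit ≫ (α_ e f' f).inv
  counit := cancelRightAdjointCounit adj' adj
  left_triangle := cancelRightAdjoint_left_triangle adj' adj
  right_triangle := cancelRightAdjoint_right_triangle adj' adj

end CancelRightAdjoint

end CategoryTheory.Bicategory.Adjunction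

open CategoryTheory.Bicategory

section

variable {B : Type*} [Bicategory B] {x y w : B} {f' : y ⟶ x} {f : x ⟶ w}

theorem IsLali.comp (hf' : IsLali f') (hf : IsLali f) : IsLali (f' ≫ f) := by
  obtain ⟨g', adj', _⟩ := hf'
  obtain ⟨g, adj, _⟩ := hf
  exact ⟨g ≫ g', adj'.comp adj, inferInstanceAs (IsIso (Adjunction.compCounit adj' adj))⟩

theorem IsLali.of_comp (hf' : IsLali f') (hf'f : IsLali (f' ≫ f)) : IsLali f := by
  obtain ⟨g', adj', _⟩ := hf'
  obtain ⟨h, adj, _⟩ := hf'f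
  exact ⟨h ≫ f', adj'.cancelLeftAdjoint adj,
    inferInstanceAs (IsIso ((α_ h f' f).hom ≫ adj.counit))⟩

theorem IsRali.comp (hf' : IsRali f') (hf : IsRali f) : IsRali (f' ≫ f) := by
  obtain ⟨e', adj', _⟩ := hf'
  obtain ⟨e, adj, _⟩ := hf
  exact ⟨e ≫ e', adj.comp adj', inferInstanceAs (IsIso (Adjunction.compUnit adj adj'))⟩

theorem IsRali.of_comp (hf' : IsRali f') (hf'f : IsRali (f' ≫ f)) : IsRali f := by
  obtain ⟨e', adj', _⟩ := hf'
  obtain ⟨e, adj, _⟩ := hf'f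
  exact ⟨e ≫ f', adj'.cancelRightAdjoint adj,
    inferInstanceAs (IsIso (adj.unit ≫ (α_ e f' f).inv))⟩

end

/-- right cancellation property: for 1-cells `f : x ⟶ w` and `f' : y ⟶ x`,
if `f'` is a lali (resp. a rali) then `f` is a lali (resp. a rali) iff the composite
`f' ≫ f` is a lali (resp. a rali). -/
theorem stmt3 {B : Type*} [Bicategory B] {x w y : B} (f : x ⟶ w) (f' : y ⟶ x) :
    (IsLali f' → (IsLali f ↔ IsLali (f' ≫ f))) ∧
    (IsRali f' → (IsRali f ↔ IsRali (f' ≫ f))) :=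
  ⟨fun hf' => ⟨hf'.comp, hf'.of_comp⟩, fun hf' => ⟨hf'.comp, hf'.of_comp⟩⟩
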